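/- Let G consist of a cycle graph on state nodes 1,...,n (n ≥ 3; edges between consecutive nodes and between 1 and n) together with two input nodes u₁, u₂ adjacent to distinct state nodes k and l respectively. Then G is strongly sign controllable (for every α ⊆ V_S \ {k,l}, N(α)\α contains a vertex with exactly one neighbor in α) if and only if k and l are adjacent on the cycle. -/

import Mathlib

/-!
If `l = k ± 1`, walk around the cycle from the two consecutive non-members `k, l` of a nonempty
`β`: the last non-member before the first member of `β` has exactly one neighbour in `β`, its
successor. If `k` and `l` are not adjacent, take `β = V_S \ {k, l}`. The only state nodes outside
`β` are `k` and `l`, and both of their cycle-neighbours lie in `β` (they are distinct as `n ≥ 3`),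
while the input nodes have no neighbour in `β` at all.
-/

open scoped Classical

/-- Dedicated node of `α` in `G`: not in `α`, exactly one neighbor in `α`. -/
def ded {V : Type} (G : SimpleGraph V) (α : Finset V) (v : V) : Prop :=
  v ∉ α ∧ (α.filter (G.Adj v)).card = 1

/-- Cycle graph on state nodes `Fin n` (consecutive edges plus the edge between
node `0` and node `n-1`) with two input nodes, adjacent to `k` and `l`. -/
def cycleTwoInput (n : ℕ) (k l : Fin n) : SimpleGraph (Fin n ⊕ Fin 2) :=
  SimpleGraph.fromRel (fun x y =>
    match x, y with
    | Sum.inl i, Sum.inl j => (i : ℕ) + 1 = (j : ℕ) ∨ ((i : ℕ) = 0 ∧ (j : ℕ) = n - 1)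
    | Sum.inr u, Sum.inl j => (u = 0 ∧ j = k) ∨ (u = 1 ∧ j = l)
    | _, _ => False)

open Finset Fin.CommRing

namespace Fin

variable {n : ℕ} [NeZero n]

theorem eq_add_one_iff_val (i j : Fin n) :
    j = i + 1 ↔ (i : ℕ) + 1 = j ∨ ((i : ℕ) = n - 1 ∧ (j : ℕ) = 0) := by
  rw [Fin.ext_iff, val_add, val_one', Nat.add_mod_mod]
  have hi := i.isLt
  have hj := j.isLt
  rcases Nat.lt_or_ge ((i : ℕ) + 1) n with h | h
  · rw [Nat.mod_eq_of_lt h]; omega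
  · rw [show (i : ℕ) + 1 = n by omega, Nat.mod_self]; omega

theorem add_one_ne_sub_one (hn : 3 ≤ n) (i : Fin n) : i + 1 ≠ i - 1 := by
  have h2 : (2 : Fin n) ≠ 0 := by
    rw [Ne, Fin.ext_iff, coe_ofNat_eq_mod, Nat.mod_eq_of_lt (by omega)]
    simp
  intro h
  exact h2 (by linear_combination h)

/-- The node just before the first member of `β` met when walking up from `a`. -/
theorem exists_sub_one_notMem_add_one_mem {β : Finset (Fin n)} (hβ : β.Nonempty) {a : Fin n}
    (ha : a ∉ β) (ha' : a + 1 ∉ β) : ∃ i ∉ β, i - 1 ∉ β ∧ i + 1 ∈ β := by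
  obtain ⟨b, hb⟩ := hβ
  have hex : ∃ t : ℕ, a + (t : Fin n) ∈ β := ⟨(b - a : Fin n), by simpa using hb⟩
  have hmin := fun s => Nat.find_min (m := s) hex
  have hfirst := Nat.find_spec hex
  obtain ⟨s, hs⟩ : ∃ s, Nat.find hex = s + 2 := by
    refine Nat.exists_eq_add_of_le' ?_
    by_contra! h
    interval_cases Nat.find hex <;> simp_all
  rw [hs] at hmin hfirst
  refine ⟨a + (s + 1 : ℕ), hmin _ (by omega), ?_, ?_⟩
  · convert hmin s (by omega) using 3
    push_cast; ring
  · convert hfirst using 1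
    push_cast; ring

end Fin

namespace cycleTwoInput

variable {n : ℕ} [NeZero n] {k l : Fin n}

theorem adj_inl_inl (hn : 2 ≤ n) {i j : Fin n} :
    (cycleTwoInput n k l).Adj (.inl i) (.inl j) ↔ j = i + 1 ∨ j = i - 1 := by
  rw [eq_sub_iff_add_eq, eq_comm (a := j + 1), Fin.eq_add_one_iff_val, Fin.eq_add_one_iff_val,
    cycleTwoInput, SimpleGraph.fromRel_adj]
  simp only [ne_eq, Sum.inl.injEq]
  have := i.isLt
  have := j.isLt
  omega

theorem not_adj_inr_inl {u : Fin 2} {j : Fin n} (hk : j ≠ k) (hl : j ≠ l) :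
    ¬ (cycleTwoInput n k l).Adj (.inr u) (.inl j) := by
  simp [cycleTwoInput, SimpleGraph.fromRel_adj, hk, hl]

theorem ded_inl_iff (hn : 2 ≤ n) {β : Finset (Fin n)} {i : Fin n} :
    ded (cycleTwoInput n k l) (β.image .inl) (.inl i) ↔ i ∉ β ∧ #(β ∩ {i + 1, i - 1}) = 1 := by
  rw [ded, filter_image, card_image_of_injective _ Sum.inl_injective, ← filter_mem_eq_inter]
  simp only [mem_image, Sum.inl.injEq, exists_eq_right, adj_inl_inl hn, mem_insert,
    mem_singleton]

theorem not_ded_inr {β : Finset (Fin n)} (hk : k ∉ β) (hl : l ∉ β) (u : Fin 2) :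
    ¬ ded (cycleTwoInput n k l) (β.image .inl) (.inr u) := by
  rintro ⟨-, hcard⟩
  obtain ⟨_, hv⟩ := card_pos.mp (hcard ▸ Nat.one_pos)
  simp only [mem_filter, mem_image] at hv
  obtain ⟨⟨j, hj, rfl⟩, hadj⟩ := hv
  exact not_adj_inr_inl (by rintro rfl; exact hk hj) (by rintro rfl; exact hl hj) hadj

theorem exists_ded_of_notMem {β : Finset (Fin n)} (hn : 2 ≤ n) (hβ : β.Nonempty) {a : Fin n}
    (ha : a ∉ β) (ha' : a + 1 ∉ β) : ∃ v, ded (cycleTwoInput n k l) (β.image .inl) v := by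
  obtain ⟨i, hi, hprev, hnext⟩ := Fin.exists_sub_one_notMem_add_one_mem hβ ha ha'
  refine ⟨.inl i, (ded_inl_iff hn).mpr ⟨hi, ?_⟩⟩
  have : β ∩ {i + 1, i - 1} = {i + 1} := by
    ext j
    simp only [mem_inter, mem_insert, mem_singleton]
    constructor
    · rintro ⟨hj, rfl | rfl⟩
      · rfl
      · exact absurd hj hprev
    · rintro rfl
      exact ⟨hnext, .inl rfl⟩
  rw [this, card_singleton]

theorem not_ded_compl_pair (hn : 3 ≤ n) (hkl : ¬ (cycleTwoInput n k l).Adj (.inl k) (.inl l))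
    (v : Fin n ⊕ Fin 2) : ¬ ded (cycleTwoInput n k l) (({k, l}ᶜ : Finset (Fin n)).image .inl) v := by
  rcases v with i | u
  · rw [ded_inl_iff (by omega)]
    rintro ⟨hi, hcard⟩
    have hsub : {i + 1, i - 1} ⊆ ({k, l}ᶜ : Finset (Fin n)) := by
      intro j hj
      have hadj : (cycleTwoInput n k l).Adj (.inl i) (.inl j) :=
        (adj_inl_inl (by omega)).mpr (by simpa using hj)
      have hij : i ≠ j := fun h => hadj.ne (congrArg _ h)
      simp only [mem_compl, mem_insert, mem_singleton, not_or]
      rcases (by simpa [or_iff_not_imp_left] using hi : i = k ∨ i = l) with rfl | rfl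
      · exact ⟨hij.symm, fun h => hkl (h ▸ hadj)⟩
      · exact ⟨fun h => hkl (h ▸ hadj.symm), hij.symm⟩
    rw [inter_eq_right.mpr hsub, card_pair (Fin.add_one_ne_sub_one hn i)] at hcard
    omega
  · exact not_ded_inr (by simp) (by simp) u

end cycleTwoInput

theorem stmt4_general (n : ℕ) (hn : 3 ≤ n) (k l : Fin n) :
    (∀ β : Finset (Fin n), β.Nonempty → k ∉ β → l ∉ β →
        ∃ v, ded (cycleTwoInput n k l) (β.image Sum.inl) v)
    ↔ (cycleTwoInput n k l).Adj (Sum.inl k) (Sum.inl l) := by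
  have : NeZero n := ⟨by omega⟩
  constructor
  · intro h
    by_contra hkl
    have hne : ({k, l}ᶜ : Finset (Fin n)).Nonempty := by
      rw [← card_pos, card_compl, Fintype.card_fin]
      have := card_le_two (a := k) (b := l)
      omega
    obtain ⟨v, hv⟩ := h _ hne (by simp) (by simp)
    exact cycleTwoInput.not_ded_compl_pair hn hkl v hv
  · intro hadj β hβ hk hl
    rcases (cycleTwoInput.adj_inl_inl (by omega)).mp hadj with rfl | rfl
    · exact cycleTwoInput.exists_ded_of_notMem (by omega) hβ hk hl
    · exact cycleTwoInput.exists_ded_of_notMem (by omega) hβ hl (by rwa [sub_add_cancel])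

theorem stmt4 (n : ℕ) (hn : 3 ≤ n) (k l : Fin n) (hkl : k ≠ l) :
    (∀ β : Finset (Fin n), β.Nonempty → k ∉ β → l ∉ β →
        ∃ v, ded (cycleTwoInput n k l) (β.image Sum.inl) v)
    ↔ (cycleTwoInput n k l).Adj (Sum.inl k) (Sum.inl l) :=
  stmt4_general n hn k l
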